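/- arXiv:2602.20572 — 2 statements merged into one kernel-verified Lean document; each statement's English description precedes it below -/
import Mathlib

section
/- In the second-order chain rule for f̅ ∘ Φ_x, the correction term vanishes: if f̅ is a twice differentiable degree-0 homogeneous extension, then ∇²(f̅ ∘ Φ_x)(θ) = R_{Φ_x(θ)}^T ∇²f̅(Φ_x(θ)) R_{Φ_x(θ)}, because all nonzero second derivatives of Φ_x lie in radial directions annihilated by ∇f̅. -/
/-!
By the second-order chain rule, the Hessian of `f̄ ∘ Φ_x` at `θ` is
`∇²f̄(Φ_x θ)(DΦ_x v, DΦ_x w) + ∇f̄(Φ_x θ)(D²Φ_x(v, w))`. Each block of `Φ_x` traces the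
circle `s ↦ cos s • x_ℓ + sin s • R x_ℓ`, so `DΦ_x v` has blocks `v_ℓ • R Φ_ℓ` while
`D²Φ_x(v, w)` has blocks `-(v_ℓ w_ℓ) • Φ_ℓ`, a blockwise radial vector. Differentiating `f̄(t • z) = f̄(z)` at `t = 1` shows
that `∇f̄(z)` annihilates every blockwise radial vector, so the correction term vanishes.
-/

/-- Counterclockwise rotation by `π/2` in `ℝ²`. -/
noncomputable def Rrot (v : EuclideanSpace ℝ (Fin 2)) : EuclideanSpace ℝ (Fin 2) :=
  (WithLp.equiv 2 (Fin 2 → ℝ)).symm ![-(v 1), v 0]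

open Real

section SecondOrderChainRule

variable {𝕜 E F G : Type*} [NontriviallyNormedField 𝕜]
  [NormedAddCommGroup E] [NormedSpace 𝕜 E] [NormedAddCommGroup F] [NormedSpace 𝕜 F]
  [NormedAddCommGroup G] [NormedSpace 𝕜 G]

theorem fderiv_fderiv_comp_apply {f : F → G} {Φ : E → F} {θ : E}
    (hf : ContDiffAt 𝕜 2 f (Φ θ)) (hΦ : ContDiffAt 𝕜 2 Φ θ) (v w : E) :
    fderiv 𝕜 (fderiv 𝕜 (f ∘ Φ)) θ v w
      = fderiv 𝕜 f (Φ θ) (fderiv 𝕜 (fderiv 𝕜 Φ) θ v w)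
        + fderiv 𝕜 (fderiv 𝕜 f) (Φ θ) (fderiv 𝕜 Φ θ v) (fderiv 𝕜 Φ θ w) := by
  have hf_near : ∀ᶠ θ' in nhds θ, DifferentiableAt 𝕜 f (Φ θ') :=
    hΦ.continuousAt.eventually ((hf.eventually (by simp)).mono
      fun _ h => h.differentiableAt (by simp))
  have hΦ_near : ∀ᶠ θ' in nhds θ, DifferentiableAt 𝕜 Φ θ' :=
    (hΦ.eventually (by simp)).mono fun _ h => h.differentiableAt (by simp)
  have hchain : fderiv 𝕜 (f ∘ Φ) =ᶠ[nhds θ] fun θ' => (fderiv 𝕜 f (Φ θ')).comp (fderiv 𝕜 Φ θ') :=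
    (hf_near.and hΦ_near).mono fun _ h => fderiv_comp _ h.1 h.2
  have hDf : HasFDerivAt (fun θ' => fderiv 𝕜 f (Φ θ'))
      ((fderiv 𝕜 (fderiv 𝕜 f) (Φ θ)).comp (fderiv 𝕜 Φ θ)) θ :=
    ((hf.fderiv_right le_rfl).differentiableAt one_ne_zero).hasFDerivAt.comp θ
      (hΦ.differentiableAt (by simp)).hasFDerivAt
  have hDΦ : HasFDerivAt (fderiv 𝕜 Φ) (fderiv 𝕜 (fderiv 𝕜 Φ) θ) θ :=
    ((hΦ.fderiv_right le_rfl).differentiableAt one_ne_zero).hasFDerivAt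
  rw [hchain.fderiv_eq, (hDf.clm_comp hDΦ).fderiv]
  simp [add_comm]

end SecondOrderChainRule

theorem fderiv_apply_blockwise_smul_eq_zero {ι F G : Type*} [Fintype ι]
    [NormedAddCommGroup F] [NormedSpace ℝ F] [NormedAddCommGroup G] [NormedSpace ℝ G]
    {f : (ι → F) → G} {z : ι → F} (hf : DifferentiableAt ℝ f z)
    (hhom : ∀ t : ι → ℝ, (∀ i, 0 < t i) → f (fun i => t i • z i) = f z) (c : ι → ℝ) :
    fderiv ℝ f z (fun i => c i • z i) = 0 := by
  set γ : ℝ → ι → F := fun s i => (1 + s * c i) • z i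
  have hγ : HasDerivAt γ (fun i => c i • z i) 0 := by
    refine hasDerivAt_pi.2 fun i => ?_
    simpa using (((hasDerivAt_id (0 : ℝ)).mul_const (c i)).const_add 1).smul_const (z i)
  have hγ0 : γ 0 = z := by simp [γ]
  -- near `s = 0` every coefficient `1 + s * c i` is positive, so homogeneity freezes `f ∘ γ`
  have hconst : f ∘ γ =ᶠ[nhds 0] fun _ => f z := by
    have hpos : ∀ᶠ s in nhds (0 : ℝ), ∀ i, 0 < 1 + s * c i :=
      Filter.eventually_all.2 fun i =>
        continuousAt_const.eventually_lt (by fun_prop) (by simp)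
    exact hpos.mono fun s hs => hhom _ hs
  have hf' : HasFDerivAt f (fderiv ℝ f z) (γ 0) := by
    rw [hγ0]
    exact hf.hasFDerivAt
  have hderiv : HasDerivAt (f ∘ γ) (fderiv ℝ f z (fun i => c i • z i)) 0 :=
    hf'.comp_hasDerivAt 0 hγ
  exact hderiv.unique ((hasDerivAt_const 0 (f z)).congr_of_eventuallyEq hconst)

theorem fderiv_pi_comp_apply {ι F : Type*} [Fintype ι] [NormedAddCommGroup F] [NormedSpace ℝ F]
    {g : ι → ℝ → F} {g' : ι → F} {θ : ι → ℝ} (hg : ∀ i, HasDerivAt (g i) (g' i) (θ i))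
    (v : ι → ℝ) :
    fderiv ℝ (fun θ' i => g i (θ' i)) θ v = fun i => v i • g' i := by
  have h : HasFDerivAt (fun θ' i => g i (θ' i))
      (ContinuousLinearMap.pi fun i =>
        (ContinuousLinearMap.proj (R := ℝ) i).smulRight (g' i)) θ := by
    refine hasFDerivAt_pi.2 fun i => ((hg i).hasFDerivAt.comp (f := fun θ' : ι → ℝ => θ' i) θ
      (hasFDerivAt_apply i θ)).congr_fderiv ?_
    ext
    simp
  rw [h.fderiv]
  ext i
  simp

section PlaneRotation

local notation "ℝ²" => EuclideanSpace ℝ (Fin 2)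

@[simp] theorem Rrot_zero : Rrot 0 = 0 := by ext i; fin_cases i <;> simp [Rrot]

@[simp] theorem Rrot_apply_zero (u : ℝ²) : Rrot u 0 = -u 1 := by simp [Rrot]
@[simp] theorem Rrot_apply_one (u : ℝ²) : Rrot u 1 = u 0 := by simp [Rrot]

theorem Rrot_add (u u' : ℝ²) : Rrot (u + u') = Rrot u + Rrot u' := by
  ext i; fin_cases i <;> simp; ring

theorem Rrot_smul (a : ℝ) (u : ℝ²) : Rrot (a • u) = a • Rrot u := by
  ext i; fin_cases i <;> simp

theorem Rrot_Rrot (u : ℝ²) : Rrot (Rrot u) = -u := by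
  ext i; fin_cases i <;> simp

noncomputable def planeRot (u : ℝ²) (s : ℝ) : ℝ² := cos s • u + sin s • Rrot u

noncomputable def blockRot {ι : Type*} (x : ι → ℝ²) (θ : ι → ℝ) : ι → ℝ² :=
  fun i => planeRot (x i) (θ i)

theorem Rrot_planeRot (u : ℝ²) (s : ℝ) : Rrot (planeRot u s) = cos s • Rrot u - sin s • u := by
  simp only [planeRot, Rrot_add, Rrot_smul, Rrot_Rrot, smul_neg, sub_eq_add_neg]

theorem planeRot_ne_zero {u : ℝ²} (hu : u ≠ 0) (s : ℝ) : planeRot u s ≠ 0 := by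
  intro h
  have hinv : u = cos s • planeRot u s - sin s • Rrot (planeRot u s) := by
    rw [Rrot_planeRot, planeRot]
    linear_combination (norm := module) -(cos_sq_add_sin_sq s) • u
  exact hu (by simpa [h] using hinv)

theorem hasDerivAt_planeRot (u : ℝ²) (s : ℝ) :
    HasDerivAt (planeRot u) (Rrot (planeRot u s)) s := by
  rw [Rrot_planeRot]
  exact (((hasDerivAt_cos s).smul_const u).add
    ((hasDerivAt_sin s).smul_const (Rrot u))).congr_deriv (by module)

theorem hasDerivAt_Rrot_planeRot (u : ℝ²) (s : ℝ) :
    HasDerivAt (fun s => Rrot (planeRot u s)) (-planeRot u s) s := by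
  simp only [Rrot_planeRot]
  exact (((hasDerivAt_cos s).smul_const (Rrot u)).sub
    ((hasDerivAt_sin s).smul_const u)).congr_deriv (by rw [planeRot]; module)

end PlaneRotation

section BlockRotation

variable {ι : Type*} [Fintype ι] (x : ι → EuclideanSpace ℝ (Fin 2))

theorem contDiff_blockRot : ContDiff ℝ 2 (blockRot x) := by
  unfold blockRot planeRot
  fun_prop

theorem fderiv_blockRot_apply (θ v : ι → ℝ) :
    fderiv ℝ (blockRot x) θ v = fun i => v i • Rrot (blockRot x θ i) :=
  fderiv_pi_comp_apply (fun i => hasDerivAt_planeRot (x i) (θ i)) v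

theorem fderiv_fderiv_blockRot_apply (θ v w : ι → ℝ) :
    fderiv ℝ (fderiv ℝ (blockRot x)) θ v w = fun i => -(v i * w i) • blockRot x θ i := by
  have hdiff : DifferentiableAt ℝ (fderiv ℝ (blockRot x)) θ :=
    ((contDiff_blockRot x).fderiv_right le_rfl).differentiable one_ne_zero θ
  calc fderiv ℝ (fderiv ℝ (blockRot x)) θ v w
      = fderiv ℝ (fun θ' => fderiv ℝ (blockRot x) θ' w) θ v := by
        rw [fderiv_clm_apply hdiff (differentiableAt_const w)]
        simp
    _ = fderiv ℝ (fun θ' i => w i • Rrot (planeRot (x i) (θ' i))) θ v := by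
        simp only [fderiv_blockRot_apply]
        rfl
    _ = fun i => -(v i * w i) • blockRot x θ i := by
        rw [fderiv_pi_comp_apply (g := fun i s => w i • Rrot (planeRot (x i) s))
          fun i => (hasDerivAt_Rrot_planeRot (x i) (θ i)).const_smul (w i)]
        ext1 i
        rw [smul_smul, smul_neg, ← neg_smul, mul_comm]
        rfl

end BlockRotation

/-- in the second-order chain rule for `f̄ ∘ Φ_x` the correction term
vanishes: for a twice differentiable degree-0 homogeneous extension `f̄`,
`∇²(f̄ ∘ Φ_x)(θ) = R_{Φ_x(θ)}ᵀ ∇²f̄(Φ_x(θ)) R_{Φ_x(θ)}` as bilinear forms. -/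
theorem stmt_10 (d : ℕ)
    (fbar : (Fin d → EuclideanSpace ℝ (Fin 2)) → ℝ)
    (hhom : ∀ z : Fin d → EuclideanSpace ℝ (Fin 2), (∀ ℓ, z ℓ ≠ 0) →
      ∀ t : Fin d → ℝ, (∀ ℓ, 0 < t ℓ) → fbar (fun ℓ => t ℓ • z ℓ) = fbar z)
    (hsmooth : ∀ z : Fin d → EuclideanSpace ℝ (Fin 2), (∀ ℓ, z ℓ ≠ 0) →
      ContDiffAt ℝ 2 fbar z)
    (x : Fin d → EuclideanSpace ℝ (Fin 2)) (hx : ∀ ℓ, ‖x ℓ‖ = 1)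
    (θ : Fin d → ℝ) (v w : Fin d → ℝ) :
    fderiv ℝ (fderiv ℝ (fun θ' : Fin d → ℝ =>
        fbar fun ℓ => Real.cos (θ' ℓ) • x ℓ + Real.sin (θ' ℓ) • Rrot (x ℓ))) θ v w
      = fderiv ℝ (fderiv ℝ fbar)
          (fun ℓ => Real.cos (θ ℓ) • x ℓ + Real.sin (θ ℓ) • Rrot (x ℓ))
          (fun ℓ => v ℓ • Rrot (Real.cos (θ ℓ) • x ℓ + Real.sin (θ ℓ) • Rrot (x ℓ)))
          (fun ℓ => w ℓ • Rrot (Real.cos (θ ℓ) • x ℓ + Real.sin (θ ℓ) • Rrot (x ℓ))) := by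
  have hz : ∀ ℓ, blockRot x θ ℓ ≠ 0 := fun ℓ =>
    planeRot_ne_zero (norm_ne_zero_iff.mp (by simp [hx])) (θ ℓ)
  have hf := hsmooth _ hz
  change fderiv ℝ (fderiv ℝ (fbar ∘ blockRot x)) θ v w
    = fderiv ℝ (fderiv ℝ fbar) (blockRot x θ) (fun ℓ => v ℓ • Rrot (blockRot x θ ℓ))
        (fun ℓ => w ℓ • Rrot (blockRot x θ ℓ))
  rw [← fderiv_blockRot_apply x θ v, ← fderiv_blockRot_apply x θ w,
    fderiv_fderiv_comp_apply hf (contDiff_blockRot x).contDiffAt,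
    fderiv_fderiv_blockRot_apply,
    fderiv_apply_blockwise_smul_eq_zero (hf.differentiableAt (by simp)) (hhom _ hz),
    zero_add]
end

section
/- Let L : [0,∞) → [0,∞) be decreasing with 0 < ∫₀^∞ L^k(r²) r^j dr < ∞ for k ∈ {1,2} and all j ≥ 0. For a bandwidth h > 0 and nonnegative integer j, lim_{h→0} h^{-(j+1)} ∫₀^π L^k((1−cos θ)/h²) θ^j dθ = 2^{(j+1)/2} ∫₀^∞ L^k(r²) r^j dr. -/
/-!
For antitone `K ≥ 0` (here `K = L^k`), substituting `θ = h t` turns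
`h^{-(j+1)} ∫₀^π K((1 - cos θ)/h²) θ^j dθ` into `∫₀^{π/h} K((1 - cos (h t))/h²) t^j dt`.
Since `(1 - cos (h t))/h² = (t²/2) sinc(h t/2)² → t²/2`, the integrand converges wherever `K` is
continuous at `t²/2`, hence almost everywhere because `K` is monotone. Jordan's inequality
`1 - cos x ≥ 2x²/π²` on `[-π, π]` and the antitonicity of `K` give the integrable majorant
`K(2t²/π²) t^j`, so dominated convergence applies. Finally `t = √2 r` gives
`∫₀^∞ K(t²/2) t^j dt = 2^{(j+1)/2} ∫₀^∞ K(r²) r^j dr`.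
-/

open MeasureTheory Real Set Filter Topology

lemma setIntegral_Ioc_comp_mul_left_mul_pow (G : ℝ → ℝ) (a : ℝ) {h : ℝ} (hh : 0 < h) (j : ℕ) :
    ∫ t in Ioc 0 (a / h), G (h * t) * t ^ j = (∫ θ in Ioc 0 a, G θ * θ ^ j) / h ^ (j + 1) := by
  rcases le_or_gt 0 a with ha | ha
  · rw [← intervalIntegral.integral_of_le (by positivity), ← intervalIntegral.integral_of_le ha]
    have hsub := intervalIntegral.integral_comp_mul_left (a := 0) (b := a / h)
      (fun θ => G θ * θ ^ j) hh.ne'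
    rw [mul_zero, mul_div_cancel₀ _ hh.ne', smul_eq_mul] at hsub
    simp only [mul_pow, mul_left_comm _ (h ^ j)] at hsub
    rw [intervalIntegral.integral_const_mul] at hsub
    field_simp at hsub
    rw [eq_div_iff (by positivity)]
    linear_combination hsub
  · rw [Ioc_eq_empty (div_neg_of_neg_of_pos ha hh).not_gt, Ioc_eq_empty ha.not_gt]
    simp

lemma setIntegral_Ioi_comp_mul_left_mul_pow (F : ℝ → ℝ) {c : ℝ} (hc : 0 < c) (j : ℕ) :
    ∫ t in Ioi 0, F (c * t) * t ^ j = (∫ r in Ioi 0, F r * r ^ j) / c ^ (j + 1) := by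
  have hsub := integral_comp_mul_left_Ioi (fun r => F r * r ^ j) 0 hc
  rw [mul_zero, smul_eq_mul] at hsub
  simp only [mul_pow, mul_left_comm _ (c ^ j)] at hsub
  rw [integral_const_mul] at hsub
  field_simp at hsub
  rw [eq_div_iff (by positivity)]
  linear_combination hsub

lemma integrableOn_Ioi_comp_mul_left_mul_pow {F : ℝ → ℝ} {j : ℕ}
    (hF : IntegrableOn (fun r => F r * r ^ j) (Ioi 0)) {c : ℝ} (hc : 0 < c) :
    IntegrableOn (fun t => F (c * t) * t ^ j) (Ioi 0) := by
  have := (integrableOn_Ioi_comp_mul_left_iff (fun r => F r * r ^ j) 0 hc).mpr (by simpa using hF)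
  simp only [mul_pow, mul_left_comm _ (c ^ j)] at this
  simpa [IntegrableOn, hc.ne'] using this.const_mul (c ^ j)⁻¹

lemma one_sub_cos_mul_div_sq (t : ℝ) {h : ℝ} (hh : h ≠ 0) :
    (1 - cos (h * t)) / h ^ 2 = t ^ 2 / 2 * sinc (h * t / 2) ^ 2 := by
  rcases eq_or_ne t 0 with rfl | ht
  · simp
  have hcos : cos (h * t) = 1 - 2 * sin (h * t / 2) ^ 2 := by
    have := cos_two_mul' (h * t / 2)
    rw [mul_div_cancel₀ _ two_ne_zero] at this
    linarith [sin_sq_add_cos_sq (h * t / 2)]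
  rw [sinc_of_ne_zero (by positivity), hcos]
  field_simp
  ring

lemma tendsto_one_sub_cos_mul_div_sq (t : ℝ) :
    Tendsto (fun h => (1 - cos (h * t)) / h ^ 2) (𝓝[≠] 0) (𝓝 (t ^ 2 / 2)) := by
  have hcont : Continuous fun h : ℝ => t ^ 2 / 2 * sinc (h * t / 2) ^ 2 := by fun_prop
  refine ((hcont.tendsto' 0 _ (by simp)).mono_left nhdsWithin_le_nhds).congr' ?_
  filter_upwards [self_mem_nhdsWithin] with h hh
  exact (one_sub_cos_mul_div_sq t hh).symm

lemma two_mul_sq_div_pi_sq_le {h t : ℝ} (hh : 0 < h) (ht₀ : 0 ≤ t) (ht : t ≤ π / h) :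
    2 * t ^ 2 / π ^ 2 ≤ (1 - cos (h * t)) / h ^ 2 := by
  have hht : |h * t| ≤ π := by
    rw [abs_of_nonneg (by positivity)]
    exact (le_div_iff₀' hh).mp ht
  have := cos_le_one_sub_mul_cos_sq hht
  rw [le_div_iff₀ (by positivity)]
  calc 2 * t ^ 2 / π ^ 2 * h ^ 2 = 2 / π ^ 2 * (h * t) ^ 2 := by ring
    _ ≤ 1 - cos (h * t) := by linarith

lemma sqrt_two_pow_succ (j : ℕ) : √2 ^ (j + 1) = (2 : ℝ) ^ (((j : ℝ) + 1) / 2) := by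
  rw [sqrt_eq_rpow, ← rpow_natCast, ← rpow_mul zero_le_two]
  push_cast
  ring_nf

section Antitone

variable {K : ℝ → ℝ} {j : ℕ}

lemma Antitone.ae_restrict_Ioi_continuousAt_sq_div_two (hK : Antitone K) :
    ∀ᵐ t ∂volume.restrict (Ioi 0), ContinuousAt K (t ^ 2 / 2) := by
  have hcount : (Ioi (0 : ℝ) ∩ {t | ¬ContinuousAt K (t ^ 2 / 2)}).Countable := by
    refine MapsTo.countable_of_injOn (f := fun t => t ^ 2 / 2) (fun t ht => ht.2) ?_
      hK.countable_not_continuousAt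
    intro s hs t ht hst
    exact (sq_eq_sq₀ hs.1.le ht.1.le).mp (by simpa using hst)
  rw [ae_restrict_iff' measurableSet_Ioi]
  filter_upwards [hcount.ae_notMem volume] with t ht ht₀
  by_contra hdisc
  exact ht ⟨ht₀, hdisc⟩

lemma tendsto_setIntegral_Ioc_one_sub_cos_mul (hK : Antitone K) (hK₀ : ∀ r, 0 ≤ K r)
    (hint : IntegrableOn (fun r => K (r ^ 2) * r ^ j) (Ioi 0)) :
    Tendsto (fun h => ∫ t in Ioc 0 (π / h), K ((1 - cos (h * t)) / h ^ 2) * t ^ j) (𝓝[>] 0)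
      (𝓝 (∫ t in Ioi 0, K (t ^ 2 / 2) * t ^ j)) := by
  set F : ℝ → ℝ → ℝ := fun h => (Iic (π / h)).indicator fun t =>
    K ((1 - cos (h * t)) / h ^ 2) * t ^ j
  have hF : ∀ h, ∫ t in Ioc 0 (π / h), K ((1 - cos (h * t)) / h ^ 2) * t ^ j =
      ∫ t in Ioi 0, F h t := fun h => by
    rw [setIntegral_indicator measurableSet_Iic, Ioi_inter_Iic]
  simp only [hF]
  refine tendsto_integral_filter_of_dominated_convergence
    (fun t => K (2 * t ^ 2 / π ^ 2) * t ^ j) ?_ ?_ ?_ ?_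
  · refine .of_forall fun h =>
      ((Measurable.mul ?_ ?_).indicator measurableSet_Iic).aestronglyMeasurable
    · exact hK.measurable.comp (by fun_prop)
    · fun_prop
  · filter_upwards [self_mem_nhdsWithin] with h (hh : 0 < h)
    refine ae_restrict_of_forall_mem measurableSet_Ioi fun t (ht₀ : 0 < t) => ?_
    have hbound₀ : 0 ≤ K (2 * t ^ 2 / π ^ 2) * t ^ j := by
      have := hK₀ (2 * t ^ 2 / π ^ 2); positivity
    dsimp only [F]
    by_cases ht : t ∈ Iic (π / h)
    · have := hK₀ ((1 - cos (h * t)) / h ^ 2)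
      rw [indicator_of_mem ht, norm_of_nonneg (by positivity)]
      gcongr
      exact hK (two_mul_sq_div_pi_sq_le hh ht₀.le ht)
    · rwa [indicator_of_notMem ht, norm_zero]
  · have hc : (0 : ℝ) < √2 / π := by positivity
    refine (integrableOn_Ioi_comp_mul_left_mul_pow (F := fun r => K (r ^ 2)) hint hc).congr_fun
      (fun t _ => ?_) measurableSet_Ioi
    dsimp only
    rw [mul_pow, div_pow, sq_sqrt zero_le_two]
    ring_nf
  · filter_upwards [hK.ae_restrict_Ioi_continuousAt_sq_div_two, ae_restrict_mem measurableSet_Ioi]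
      with t hcont (ht₀ : 0 < t)
    have harg := (tendsto_one_sub_cos_mul_div_sq t).mono_left (nhdsGT_le_nhdsNE 0)
    refine ((hcont.tendsto.comp harg).mul_const _).congr' ?_
    filter_upwards [Ioo_mem_nhdsGT (div_pos pi_pos ht₀)] with h hh
    have ht : t ∈ Iic (π / h) := (le_div_iff₀ hh.1).mpr (by linarith [(lt_div_iff₀ ht₀).mp hh.2])
    exact (indicator_of_mem ht fun t => K ((1 - cos (h * t)) / h ^ 2) * t ^ j).symm

theorem tendsto_integral_one_sub_cos_div_sq_mul_pow (hK : Antitone K) (hK₀ : ∀ r, 0 ≤ K r)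
    (hint : IntegrableOn (fun r => K (r ^ 2) * r ^ j) (Ioi 0)) :
    Tendsto (fun h => (∫ θ in Ioc 0 π, K ((1 - cos θ) / h ^ 2) * θ ^ j) / h ^ (j + 1)) (𝓝[>] 0)
      (𝓝 (2 ^ (((j : ℝ) + 1) / 2) * ∫ r in Ioi 0, K (r ^ 2) * r ^ j)) := by
  have hlimit : ∫ t in Ioi 0, K (t ^ 2 / 2) * t ^ j =
      2 ^ (((j : ℝ) + 1) / 2) * ∫ r in Ioi 0, K (r ^ 2) * r ^ j := by
    have hscale := setIntegral_Ioi_comp_mul_left_mul_pow (fun r => K (r ^ 2))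
      (c := (√2)⁻¹) (by positivity) j
    simp only [inv_pow, ← div_eq_inv_mul, div_inv_eq_mul, div_pow, sq_sqrt zero_le_two] at hscale
    rw [hscale, mul_comm, sqrt_two_pow_succ]
  rw [← hlimit]
  refine (tendsto_setIntegral_Ioc_one_sub_cos_mul hK hK₀ hint).congr' ?_
  filter_upwards [self_mem_nhdsWithin] with h (hh : 0 < h)
  exact setIntegral_Ioc_comp_mul_left_mul_pow (fun θ => K ((1 - cos θ) / h ^ 2)) π hh j

end Antitone

theorem stmt_12_general (L : ℝ → ℝ) (hmono : AntitoneOn L (Set.Ici 0)) (hnn : ∀ r, 0 ≤ L r)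
    (hint : ∀ k : ℕ, (k = 1 ∨ k = 2) → ∀ j : ℕ,
      MeasureTheory.IntegrableOn (fun r => L (r ^ 2) ^ k * r ^ j) (Set.Ioi (0:ℝ)))
    (k : ℕ) (hk : k = 1 ∨ k = 2) (j : ℕ) :
    Filter.Tendsto
      (fun h : ℝ =>
        (∫ θ in Set.Ioc (0:ℝ) Real.pi, L ((1 - Real.cos θ) / h ^ 2) ^ k * θ ^ j) / h ^ (j + 1))
      (nhdsWithin 0 (Set.Ioi 0))
      (nhds ((2:ℝ) ^ (((j:ℝ) + 1) / 2) * ∫ r in Set.Ioi (0:ℝ), L (r ^ 2) ^ k * r ^ j)) := by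
  set K : ℝ → ℝ := fun r => L (max r 0) ^ k
  have hK : Antitone K := fun x y hxy => pow_le_pow_left₀ (hnn _)
    (hmono (mem_Ici.mpr (le_max_right x 0)) (mem_Ici.mpr (le_max_right y 0))
      (max_le_max_right 0 hxy)) k
  have hKL : ∀ r, 0 ≤ r → K r = L r ^ k := fun r hr => by simp only [K, max_eq_left hr]
  have hKsq : ∀ r : ℝ, K (r ^ 2) = L (r ^ 2) ^ k := fun r => hKL _ (sq_nonneg r)
  have hKcos : ∀ θ h : ℝ, K ((1 - cos θ) / h ^ 2) = L ((1 - cos θ) / h ^ 2) ^ k := fun θ h =>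
    hKL _ (div_nonneg (sub_nonneg.mpr (cos_le_one θ)) (sq_nonneg h))
  have hlim := tendsto_integral_one_sub_cos_div_sq_mul_pow hK (fun r => pow_nonneg (hnn _) k)
    (by simpa only [hKsq] using hint k hk j)
  simpa only [hKsq, hKcos] using hlim

/-- one-dimensional circular kernel moment limit. Let `L : [0,∞) → [0,∞)` be
decreasing with `0 < ∫₀^∞ L^k(r²) r^j dr < ∞` for `k ∈ {1,2}` and all `j ≥ 0`. Then for a
bandwidth `h → 0⁺` and nonnegative integer `j`,
`h^{-(j+1)} ∫₀^π L^k((1−cos θ)/h²) θ^j dθ → 2^{(j+1)/2} ∫₀^∞ L^k(r²) r^j dr`. -/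
theorem stmt_12 (L : ℝ → ℝ) (hmono : AntitoneOn L (Set.Ici 0)) (hnn : ∀ r, 0 ≤ L r)
    (hint : ∀ k : ℕ, (k = 1 ∨ k = 2) → ∀ j : ℕ,
      MeasureTheory.IntegrableOn (fun r => L (r ^ 2) ^ k * r ^ j) (Set.Ioi (0:ℝ)))
    (hpos : ∀ k : ℕ, (k = 1 ∨ k = 2) → ∀ j : ℕ,
      0 < ∫ r in Set.Ioi (0:ℝ), L (r ^ 2) ^ k * r ^ j)
    (k : ℕ) (hk : k = 1 ∨ k = 2) (j : ℕ) :
    Filter.Tendsto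
      (fun h : ℝ =>
        (∫ θ in Set.Ioc (0:ℝ) Real.pi, L ((1 - Real.cos θ) / h ^ 2) ^ k * θ ^ j) / h ^ (j + 1))
      (nhdsWithin 0 (Set.Ioi 0))
      (nhds ((2:ℝ) ^ (((j:ℝ) + 1) / 2) * ∫ r in Set.Ioi (0:ℝ), L (r ^ 2) ^ k * r ^ j)) :=
  stmt_12_general L hmono hnn hint k hk j
end
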